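/- The average primal sequence of Algorithm (DG) converges sublinearly at rate O(1/k): for all k ≥ 0, dist_K(G û^k + g) ≤ 2 L_G R_d / (k+1), and −(2 L_G R_d / (k+1))·(R_d + ‖x^0‖) ≤ f(û^k) − f* ≤ L_G ‖x^0‖² / (2(k+1)). -/

import Mathlib

/-!
Each step of (DG) is a projected gradient ascent step on the concave dual function `d`, whose
linearisation at `x` is `L(u(x), ·)`. Strong convexity of `L(·, x)` makes `d` smooth with constant
`‖G‖² / σ_f`, so for every `z ∈ K*` the step satisfies the three-point inequality
`α_k L(u^k, z) + ‖x^{k+1} - z‖² / 2 - ‖x^k - z‖² / 2 ≤ α_k d(x^{k+1}) ≤ α_k f*`.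
With `z = x*` (where `L(u^k, x*) ≥ d(x*) = f*`) this is Fejér monotonicity, `‖x^k - x*‖ ≤ R_d`.
With `z = 0`, where `L(u^k, 0) = f(u^k)`, it telescopes to `∑ α_j f(u^j) ≤ S_k f* + ‖x^0‖² / 2`,
and Jensen's inequality gives the upper bound. Summing the cone-projection inequalities
`α_j ⟪z, ∇d(x^j)⟫ ≤ ⟪z, x^{j+1} - x^j⟫` gives `S_k ⟪z, -(G û^k + g)⟫ ≤ 2 R_d ‖z‖` on `K*`;
testing with `z = [G û^k + g]_K - (G û^k + g) ∈ K*` bounds the distance to `K` by `2 R_d / S_k`,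
and the lower bound follows from `f* = d(x*) ≤ L(û^k, x*)`. Finally `S_k ≥ (k + 1) / L_G`.
-/

open scoped RealInnerProductSpace
open Filter Topology Finset

section NearestPoint

variable {F : Type*} [NormedAddCommGroup F] [InnerProductSpace ℝ F] {C : Set F} {z q w : F}

lemma exists_isMinOn_norm_sub [CompleteSpace F] (hne : C.Nonempty) (hcl : IsClosed C)
    (hcv : Convex ℝ C) (z : F) : ∃ q ∈ C, IsMinOn (‖z - ·‖) C q := by
  obtain ⟨q, hq, heq⟩ := exists_norm_eq_iInf_of_complete_convex hne hcl.isComplete hcv z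
  refine ⟨q, hq, isMinOn_iff.2 fun w hw => heq ▸ ?_⟩
  exact ciInf_le ⟨0, Set.forall_mem_range.2 fun _ => norm_nonneg _⟩ (⟨w, hw⟩ : C)

lemma inner_sub_sub_nonpos_of_isMinOn (hcv : Convex ℝ C) (hq : q ∈ C)
    (hmin : IsMinOn (‖z - ·‖) C q) (hw : w ∈ C) : ⟪z - q, w - q⟫ ≤ 0 := by
  have : Nonempty C := ⟨⟨q, hq⟩⟩
  refine (norm_eq_iInf_iff_real_inner_le_zero hcv hq).1 (le_antisymm ?_ ?_) w hw
  · exact le_ciInf fun w => isMinOn_iff.1 hmin w w.2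
  · exact ciInf_le ⟨0, Set.forall_mem_range.2 fun _ => norm_nonneg _⟩ (⟨q, hq⟩ : C)

/-- Three-point inequality for a projected gradient ascent step `x' = P_C (x + α r)` on a function
with value `D` at `x'` and linearisation `c + ⟪·, r⟫` at `x`. -/
lemma projected_ascent_step_le (hcv : Convex ℝ C) {x r x' : F} {c D α L : ℝ}
    (hα : 0 ≤ α) (hαL : α * L ≤ 1) (hx' : x' ∈ C) (hmin : IsMinOn (‖x + α • r - ·‖) C x')
    (hD : c + ⟪x', r⟫ - L / 2 * ‖x' - x‖ ^ 2 ≤ D) (hz : z ∈ C) :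
    α * (c + ⟪z, r⟫) + (‖x' - z‖ ^ 2 - ‖x - z‖ ^ 2) / 2 ≤ α * D := by
  have hvi := inner_sub_sub_nonpos_of_isMinOn hcv hx' hmin hz
  rw [add_sub_right_comm, inner_add_left, real_inner_smul_left, inner_sub_right r,
    real_inner_comm z r, real_inner_comm x' r] at hvi
  have hpol := norm_sub_sq_real (x - x') (z - x')
  rw [sub_sub_sub_cancel_right, norm_sub_rev x x', norm_sub_rev z x'] at hpol
  have hαD := mul_le_mul_of_nonneg_left hD hα
  have hL : α * L * ‖x' - x‖ ^ 2 ≤ ‖x' - x‖ ^ 2 := mul_le_of_le_one_left (sq_nonneg _) hαL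
  nlinarith

variable (hcv : Convex ℝ C) (hcone : ∀ c : ℝ, 0 ≤ c → ∀ v ∈ C, c • v ∈ C)
include hcv hcone

lemma inner_sub_eq_zero_of_isMinOn_of_cone (hq : q ∈ C) (hmin : IsMinOn (‖z - ·‖) C q) :
    ⟪z - q, q⟫ = 0 := by
  have h0 := inner_sub_sub_nonpos_of_isMinOn hcv hq hmin (by simpa using hcone 0 le_rfl q hq)
  have h2 := inner_sub_sub_nonpos_of_isMinOn hcv hq hmin (hcone 2 zero_le_two q hq)
  rw [zero_sub, inner_neg_right] at h0
  rw [two_smul, add_sub_cancel_right] at h2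
  linarith

lemma inner_sub_nonpos_of_isMinOn_of_cone (hq : q ∈ C) (hmin : IsMinOn (‖z - ·‖) C q)
    (hw : w ∈ C) : ⟪z - q, w⟫ ≤ 0 := by
  have := inner_sub_sub_nonpos_of_isMinOn hcv hq hmin hw
  rwa [inner_sub_right, inner_sub_eq_zero_of_isMinOn_of_cone hcv hcone hq hmin, sub_zero] at this

lemma sub_mem_dual_of_isMinOn_of_cone (hq : q ∈ C) (hmin : IsMinOn (‖z - ·‖) C q) :
    q - z ∈ PointedCone.dual (innerₗ F) C := by
  intro w hw
  have := inner_sub_nonpos_of_isMinOn_of_cone hcv hcone hq hmin hw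
  rw [← neg_sub, inner_neg_left, real_inner_comm] at this
  simpa [real_inner_comm] using! neg_nonneg.2 this

lemma norm_sub_le_of_forall_mem_dual (hq : q ∈ C) (hmin : IsMinOn (‖z - ·‖) C q) {S D : ℝ}
    (hS : 0 < S) (hD : 0 ≤ D)
    (h : ∀ y ∈ PointedCone.dual (innerₗ F) C, S * ⟪y, -z⟫ ≤ ‖y‖ * D) :
    ‖z - q‖ ≤ D / S := by
  have hsq : ⟪q - z, -z⟫ = ‖z - q‖ ^ 2 := by
    rw [← neg_sub, inner_neg_neg, ← real_inner_self_eq_norm_sq, inner_sub_right,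
      inner_sub_eq_zero_of_isMinOn_of_cone hcv hcone hq hmin, sub_zero]
  have key := h _ (sub_mem_dual_of_isMinOn_of_cone hcv hcone hq hmin)
  rw [hsq, norm_sub_rev q z] at key
  rw [le_div_iff₀ hS]
  rcases (norm_nonneg (z - q)).eq_or_lt with h0 | hpos
  · simpa [← h0] using hD
  · nlinarith

lemma inner_sum_smul_le_of_isMinOn_of_cone {α : ℕ → ℝ} {x r : ℕ → F}
    (hx : ∀ j, x (j + 1) ∈ C) (hmin : ∀ j, IsMinOn (‖x j + α j • r j - ·‖) C (x (j + 1)))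
    (k : ℕ) {y : F} (hy : y ∈ C) :
    ⟪y, ∑ j ∈ range (k + 1), α j • r j⟫ ≤ ⟪y, x (k + 1) - x 0⟫ := by
  have hstep : ∀ j, ⟪y, α j • r j⟫ ≤ ⟪y, x (j + 1) - x j⟫ := by
    intro j
    have := inner_sub_nonpos_of_isMinOn_of_cone hcv hcone (hx j) (hmin j) hy
    rw [show x j + α j • r j - x (j + 1) = α j • r j - (x (j + 1) - x j) by abel,
      inner_sub_left, real_inner_comm, real_inner_comm y] at this
    linarith
  rw [inner_sum, ← sum_range_sub, inner_sum]
  exact sum_le_sum fun j _ => hstep j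

end NearestPoint

lemma neg_inner_le_norm_mul_norm_sub_of_mem_dual {F : Type*} [NormedAddCommGroup F]
    [InnerProductSpace ℝ F] {K : Set F} {y v w : F} (hy : y ∈ PointedCone.dual (innerₗ F) K)
    (hw : w ∈ K) : -⟪y, v⟫ ≤ ‖y‖ * ‖v - w‖ := by
  have h1 : 0 ≤ ⟪y, w⟫ := by simpa [real_inner_comm] using hy hw
  have h2 := real_inner_le_norm y (w - v)
  rw [inner_sub_right, norm_sub_rev] at h2
  linarith

lemma StrongConvexOn.add_sq_le_of_isMinOn {E : Type*} [NormedAddCommGroup E] [NormedSpace ℝ E]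
    {U : Set E} {σ : ℝ} {h : E → ℝ} {u₀ u : E} (hh : StrongConvexOn U σ h) (hu₀ : u₀ ∈ U)
    (hmin : IsMinOn h U u₀) (hu : u ∈ U) : h u₀ + σ / 2 * ‖u - u₀‖ ^ 2 ≤ h u := by
  -- compare `h u₀` with `h` on the segment from `u₀` to `u`, then let the point tend to `u₀`
  have hseg : ∀ t ∈ Set.Ioc (0 : ℝ) 1, h u₀ + (1 - t) * (σ / 2 * ‖u - u₀‖ ^ 2) ≤ h u := by
    rintro t ⟨ht0, ht1⟩
    have hconv := hh.2 hu₀ hu (sub_nonneg.2 ht1) ht0.le (sub_add_cancel 1 t)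
    have hle := isMinOn_iff.1 hmin _ (hh.1 hu₀ hu (sub_nonneg.2 ht1) ht0.le (sub_add_cancel 1 t))
    rw [norm_sub_rev] at hconv
    simp only [smul_eq_mul] at hconv
    refine le_of_mul_le_mul_left ?_ ht0
    linarith
  have hlim : Tendsto (fun t : ℝ => h u₀ + (1 - t) * (σ / 2 * ‖u - u₀‖ ^ 2)) (𝓝[>] 0)
      (𝓝 (h u₀ + (1 - 0) * (σ / 2 * ‖u - u₀‖ ^ 2))) :=
    (Continuous.tendsto (by fun_prop) 0).mono_left nhdsWithin_le_nhds
  rw [sub_zero, one_mul] at hlim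
  exact le_of_tendsto hlim (eventually_of_mem (Ioc_mem_nhdsGT zero_lt_one) hseg)

lemma Finset.sum_smul_map_add_eq_smul_centerMass {R E F M ι : Type*} [Field R] [AddCommGroup E]
    [Module R E] [AddCommGroup F] [Module R F] [FunLike M E F] [LinearMapClass M R E F]
    (G : M) (g : F) {t : Finset ι} {w : ι → R} (z : ι → E) (hw : ∑ i ∈ t, w i ≠ 0) :
    ∑ i ∈ t, w i • (G (z i) + g) = (∑ i ∈ t, w i) • (G (t.centerMass w z) + g) := by
  simp only [centerMass, map_smul, map_sum, smul_add, sum_add_distrib, sum_smul,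
    smul_inv_smul₀ hw]

lemma ConvexOn.sum_mul_map_centerMass_sub_le {E : Type*} [AddCommGroup E] [Module ℝ E]
    {U : Set E} {φ : E → ℝ} (hφ : ConvexOn ℝ U φ) {u : ℕ → E} (hu : ∀ j, u j ∈ U)
    {α b : ℕ → ℝ} {c : ℝ} (hα : ∀ j, 0 ≤ α j)
    (h : ∀ j, α j * φ (u j) + (b (j + 1) - b j) ≤ α j * c) {k : ℕ} (hb : 0 ≤ b (k + 1))
    (hS : 0 < ∑ j ∈ range (k + 1), α j) :
    (∑ j ∈ range (k + 1), α j) * (φ ((range (k + 1)).centerMass α u) - c) ≤ b 0 := by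
  have hjensen : φ ((range (k + 1)).centerMass α u)
      ≤ (∑ j ∈ range (k + 1), α j)⁻¹ * ∑ j ∈ range (k + 1), α j * φ (u j) :=
    hφ.map_centerMass_le (fun j _ => hα j) hS (fun j _ => hu j)
  have hsum := sum_le_sum fun j (_ : j ∈ range (k + 1)) => h j
  rw [sum_add_distrib, sum_range_sub, ← sum_mul] at hsum
  rw [le_inv_mul_iff₀ hS] at hjensen
  nlinarith

section Lagrangian

variable {E F : Type*} [NormedAddCommGroup E] [InnerProductSpace ℝ E]
  [NormedAddCommGroup F] [InnerProductSpace ℝ F]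

def lagrangian (f : E → ℝ) (G : E →L[ℝ] F) (g : F) (u : E) (x : F) : ℝ :=
  f u + ⟪x, -(G u) - g⟫

variable {f : E → ℝ} {U : Set E} {σ : ℝ}

lemma strongConvexOn_lagrangian (hf : StrongConvexOn U σ f) (G : E →L[ℝ] F) (g : F) (x : F) :
    StrongConvexOn U σ (lagrangian f G g · x) := by
  rw [strongConvexOn_iff_convex] at hf ⊢
  have haff : ConvexOn ℝ U fun u => ⟪x, -(G u) - g⟫ :=
    (((innerₗ F x).comp (-G.toLinearMap)).convexOn hf.1).add_const (-⟪x, g⟫) |>.congr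
      fun u _ => by simp [inner_add_right, sub_eq_add_neg]
  refine (hf.add haff).congr fun u _ => ?_
  simp only [lagrangian, Pi.add_apply]
  ring

variable {G : E →L[ℝ] F} {g : F}

lemma lagrangian_le_of_mem_dual {K : Set F} {u : E} {y : F}
    (hy : y ∈ PointedCone.dual (innerₗ F) K) (hu : G u + g ∈ K) : lagrangian f G g u y ≤ f u := by
  have : 0 ≤ ⟪y, G u + g⟫ := by
    have := hy hu
    rwa [innerₗ_apply_apply, real_inner_comm] at this
  rw [lagrangian, ← neg_add', inner_neg_right]
  linarith

variable {uu : F → E}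

lemma lagrangian_min_le_of_mem_dual (hmin : ∀ y, IsMinOn (lagrangian f G g · y) U (uu y))
    {K : Set F} {u : E} {y : F} (hu : u ∈ U)
    (hGu : G u + g ∈ K) (hy : y ∈ PointedCone.dual (innerₗ F) K) :
    lagrangian f G g (uu y) y ≤ f u :=
  (isMinOn_iff.1 (hmin y) u hu).trans (lagrangian_le_of_mem_dual hy hGu)

/-- Smoothness of the dual function `y ↦ lagrangian f G g (uu y) y`, whose linearisation at `y`
is `lagrangian f G g (uu y)`. -/
lemma lagrangian_sub_le_lagrangian_min (hσ : 0 < σ) (hf : StrongConvexOn U σ f)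
    (huU : ∀ y, uu y ∈ U) (hmin : ∀ y, IsMinOn (lagrangian f G g · y) U (uu y)) (y z : F) :
    lagrangian f G g (uu y) z - ‖G‖ ^ 2 / σ / 2 * ‖z - y‖ ^ 2 ≤ lagrangian f G g (uu z) z := by
  have hgrowth := (strongConvexOn_lagrangian hf G g y).add_sq_le_of_isMinOn (huU y) (hmin y) (huU z)
  have hcs : ⟪z - y, G (uu z - uu y)⟫ ≤ ‖z - y‖ * (‖G‖ * ‖uu z - uu y‖) :=
    (real_inner_le_norm _ _).trans (mul_le_mul_of_nonneg_left (G.le_opNorm _) (norm_nonneg _))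
  have hamgm : ‖G‖ * ‖z - y‖ * ‖uu z - uu y‖
      ≤ σ / 2 * ‖uu z - uu y‖ ^ 2 + ‖G‖ ^ 2 / σ / 2 * ‖z - y‖ ^ 2 := by
    have := sq_nonneg (σ * ‖uu z - uu y‖ - ‖G‖ * ‖z - y‖)
    field_simp
    nlinarith
  simp only [lagrangian, map_sub, inner_sub_left, inner_sub_right, inner_neg_right] at hgrowth hcs ⊢
  nlinarith

lemma lagrangian_min_le_add_norm_mul_norm_sub (hmin : ∀ y, IsMinOn (lagrangian f G g · y) U (uu y))
    {K : Set F} {y w : F} (hy : y ∈ PointedCone.dual (innerₗ F) K) (hw : w ∈ K) {u : E}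
    (hu : u ∈ U) : lagrangian f G g (uu y) y ≤ f u + ‖y‖ * ‖G u + g - w‖ := by
  have h1 := isMinOn_iff.1 (hmin y) u hu
  have h2 := neg_inner_le_norm_mul_norm_sub_of_mem_dual (v := G u + g) hy hw
  have h3 : lagrangian f G g u y = f u - ⟪y, G u + g⟫ := by
    rw [lagrangian, ← neg_add', inner_neg_right, sub_eq_add_neg]
  linarith

section DualGradient

variable {K : Set F} {α : ℕ → ℝ} {x : ℕ → F}
  (hσ : 0 < σ) (hf : StrongConvexOn U σ f)
  (huU : ∀ y, uu y ∈ U) (hmin : ∀ y, IsMinOn (lagrangian f G g · y) U (uu y))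
  (hα : ∀ j, 0 ≤ α j) (hαL : ∀ j, α j * (‖G‖ ^ 2 / σ) ≤ 1)
  (hx : ∀ j, x (j + 1) ∈ PointedCone.dual (innerₗ F) K)
  (hxmin : ∀ j, IsMinOn (‖x j + α j • (-(G (uu (x j))) - g) - ·‖)
    (PointedCone.dual (innerₗ F) K) (x (j + 1)))
include hσ hf huU hmin hα hαL hx hxmin

lemma dualGradient_step (j : ℕ) {z : F} (hz : z ∈ PointedCone.dual (innerₗ F) K) :
    α j * lagrangian f G g (uu (x j)) z + (‖x (j + 1) - z‖ ^ 2 - ‖x j - z‖ ^ 2) / 2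
      ≤ α j * lagrangian f G g (uu (x (j + 1))) (x (j + 1)) :=
  projected_ascent_step_le (PointedCone.convex _) (hα j) (hαL j) (hx j) (hxmin j)
    (lagrangian_sub_le_lagrangian_min hσ hf huU hmin _ _) hz

variable {ustar : E} (hustar : ustar ∈ U) (hfeas : G ustar + g ∈ K)
include hustar hfeas

lemma dualGradient_norm_sub_le {xstar : F} (hxstar : xstar ∈ PointedCone.dual (innerₗ F) K)
    (hdual : lagrangian f G g (uu xstar) xstar = f ustar) (j : ℕ) :
    ‖x j - xstar‖ ≤ ‖x 0 - xstar‖ := by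
  refine antitone_nat_of_succ_le (f := fun j => ‖x j - xstar‖) (fun j => ?_) (Nat.zero_le j)
  have hstep := dualGradient_step hσ hf huU hmin hα hαL hx hxmin j hxstar
  have hopt := hdual.symm.trans_le (isMinOn_iff.1 (hmin xstar) _ (huU (x j)))
  have hweak := lagrangian_min_le_of_mem_dual hmin hustar hfeas (hx j)
  have hsq : ‖x (j + 1) - xstar‖ ^ 2 ≤ ‖x j - xstar‖ ^ 2 := by nlinarith [hα j]
  exact (sq_le_sq₀ (norm_nonneg _) (norm_nonneg _)).1 hsq

lemma dualGradient_sum_mul_sub_le (k : ℕ) (hS : 0 < ∑ j ∈ range (k + 1), α j) :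
    (∑ j ∈ range (k + 1), α j) * (f ((range (k + 1)).centerMass α fun j => uu (x j)) - f ustar)
      ≤ ‖x 0‖ ^ 2 / 2 := by
  refine (hf.convexOn fun r => by positivity).sum_mul_map_centerMass_sub_le
    (fun j => huU (x j)) hα (b := fun j => ‖x j‖ ^ 2 / 2) (fun j => ?_) (by positivity) hS
  have hstep := dualGradient_step hσ hf huU hmin hα hαL hx hxmin j (zero_mem _)
  have hweak := lagrangian_min_le_of_mem_dual hmin hustar hfeas (hx j)
  simp only [lagrangian, inner_zero_left, add_zero, sub_zero] at hstep hweak ⊢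
  nlinarith [hα j]

lemma dualGradient_norm_sub_le_of_isMinOn (hKcv : Convex ℝ K)
    (hKcone : ∀ c : ℝ, 0 ≤ c → ∀ v ∈ K, c • v ∈ K) {xstar : F}
    (hxstar : xstar ∈ PointedCone.dual (innerₗ F) K)
    (hdual : lagrangian f G g (uu xstar) xstar = f ustar) (k : ℕ)
    (hS : 0 < ∑ j ∈ range (k + 1), α j) {p : F} (hp : p ∈ K)
    (hpmin : IsMinOn (‖G ((range (k + 1)).centerMass α fun j => uu (x j)) + g - ·‖) K p) :
    ‖G ((range (k + 1)).centerMass α fun j => uu (x j)) + g - p‖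
      ≤ 2 * ‖x 0 - xstar‖ / ∑ j ∈ range (k + 1), α j := by
  refine norm_sub_le_of_forall_mem_dual hKcv hKcone hp hpmin hS (by positivity) fun y hy => ?_
  have hres := inner_sum_smul_le_of_isMinOn_of_cone (PointedCone.convex _)
    (fun c hc v hv => PointedCone.smul_mem _ hc hv) hx hxmin k hy
  simp only [← neg_add', smul_neg, sum_neg_distrib] at hres
  rw [sum_smul_map_add_eq_smul_centerMass G g (fun j => uu (x j)) hS.ne', inner_neg_right,
    real_inner_smul_right, ← mul_neg, ← inner_neg_right] at hres
  have hfejer := dualGradient_norm_sub_le hσ hf huU hmin hα hαL hx hxmin hustar hfeas hxstar hdual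
  have hdiam : ‖x (k + 1) - x 0‖ ≤ 2 * ‖x 0 - xstar‖ := by
    have := norm_sub_le_norm_sub_add_norm_sub (x (k + 1)) xstar (x 0)
    rw [norm_sub_rev xstar] at this
    linarith [hfejer (k + 1)]
  calc _ ≤ ⟪y, x (k + 1) - x 0⟫ := hres
    _ ≤ ‖y‖ * ‖x (k + 1) - x 0‖ := real_inner_le_norm _ _
    _ ≤ ‖y‖ * (2 * ‖x 0 - xstar‖) := mul_le_mul_of_nonneg_left hdiam (norm_nonneg _)

omit hα in
theorem dualGradient_centerMass_bounds [CompleteSpace F] (hKne : K.Nonempty) (hKcl : IsClosed K)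
    (hKcv : Convex ℝ K) (hKcone : ∀ c : ℝ, 0 ≤ c → ∀ v ∈ K, c • v ∈ K) {xstar : F}
    (hxstar : xstar ∈ PointedCone.dual (innerₗ F) K)
    (hdual : lagrangian f G g (uu xstar) xstar = f ustar) {L : ℝ} (hL : 0 < L)
    (hLα : ∀ j, 1 / L ≤ α j) (k : ℕ) :
    Metric.infDist (G ((range (k + 1)).centerMass α fun j => uu (x j)) + g) K
        ≤ 2 * L * ‖x 0 - xstar‖ / (k + 1) ∧
      -(2 * L * ‖x 0 - xstar‖ / (k + 1) * (‖x 0 - xstar‖ + ‖x 0‖))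
        ≤ f ((range (k + 1)).centerMass α fun j => uu (x j)) - f ustar ∧
      f ((range (k + 1)).centerMass α fun j => uu (x j)) - f ustar
        ≤ L * ‖x 0‖ ^ 2 / (2 * (k + 1)) := by
  have hα : ∀ j, 0 ≤ α j := fun j => (by positivity : (0 : ℝ) ≤ 1 / L).trans (hLα j)
  have hk : (0 : ℝ) < k + 1 := by positivity
  have hLS : (k : ℝ) + 1 ≤ L * ∑ j ∈ range (k + 1), α j := by
    have := card_nsmul_le_sum (range (k + 1)) α _ fun j _ => hLα j
    rw [card_range, nsmul_eq_mul, Nat.cast_add_one, ← div_eq_mul_one_div, div_le_iff₀' hL] at this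
    exact this
  have hS : 0 < ∑ j ∈ range (k + 1), α j := pos_of_mul_pos_right (hk.trans_le hLS) hL.le
  obtain ⟨p, hp, hpmin⟩ := exists_isMinOn_norm_sub hKne hKcl hKcv
    (G ((range (k + 1)).centerMass α fun j => uu (x j)) + g)
  have hdist : ‖G ((range (k + 1)).centerMass α fun j => uu (x j)) + g - p‖
      ≤ 2 * L * ‖x 0 - xstar‖ / (k + 1) := by
    refine (dualGradient_norm_sub_le_of_isMinOn hσ hf huU hmin hα hαL hx hxmin hustar hfeas
      hKcv hKcone hxstar hdual k hS hp hpmin).trans ?_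
    rw [div_le_div_iff₀ hS hk]
    nlinarith [norm_nonneg (x 0 - xstar)]
  have hgap := dualGradient_sum_mul_sub_le hσ hf huU hmin hα hαL hx hxmin hustar hfeas k hS
  have hlow := lagrangian_min_le_add_norm_mul_norm_sub hmin hxstar hp
    (hf.1.centerMass_mem (fun j _ => hα j) hS fun j _ => huU (x j))
  have hxstar_le : ‖xstar‖ ≤ ‖x 0 - xstar‖ + ‖x 0‖ := by
    linarith [norm_le_norm_add_norm_sub (x 0) xstar]
  refine ⟨?_, ?_, ?_⟩
  · refine le_trans ?_ hdist
    simpa [dist_eq_norm] using Metric.infDist_le_dist_of_mem hp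
  · have := mul_le_mul hxstar_le hdist (norm_nonneg _) (by positivity)
    linarith
  · rw [le_div_iff₀ (by positivity)]
    nlinarith [sq_nonneg ‖x 0‖]

end DualGradient

end Lagrangian

theorem stmt_6_general {n p : ℕ}
    (f : EuclideanSpace ℝ (Fin n) → ℝ) (σf : ℝ) (hσf : 0 < σf)
    (hfsc : StrongConvexOn Set.univ σf f)
    (U : Set (EuclideanSpace ℝ (Fin n))) (hUcv : Convex ℝ U)
    (G : EuclideanSpace ℝ (Fin n) →L[ℝ] EuclideanSpace ℝ (Fin p)) (hG : G ≠ 0) (g : EuclideanSpace ℝ (Fin p))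
    (K : Set (EuclideanSpace ℝ (Fin p))) (hKne : K.Nonempty) (hKcl : IsClosed K) (hKcv : Convex ℝ K)
    (hKcone : ∀ c : ℝ, 0 ≤ c → ∀ v ∈ K, c • v ∈ K)
    (Kstar : Set (EuclideanSpace ℝ (Fin p)))
    (hKstar : Kstar = {x : EuclideanSpace ℝ (Fin p) | ∀ v ∈ K, 0 ≤ ⟪x, v⟫})
    (Lag : EuclideanSpace ℝ (Fin n) → EuclideanSpace ℝ (Fin p) → ℝ)
    (hLag : ∀ u x, Lag u x = f u + ⟪x, -(G u) - g⟫)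
    (uu : EuclideanSpace ℝ (Fin p) → EuclideanSpace ℝ (Fin n))
    (huu : ∀ x : EuclideanSpace ℝ (Fin p), uu x ∈ U ∧ ∀ u ∈ U, Lag (uu x) x ≤ Lag u x)
    (d : EuclideanSpace ℝ (Fin p) → ℝ) (hd : ∀ x, d x = Lag (uu x) x)
    (ustar : EuclideanSpace ℝ (Fin n))
    (hustar : ustar ∈ U ∧ G ustar + g ∈ K ∧ ∀ u ∈ U, G u + g ∈ K → f ustar ≤ f u)
    (fstar : ℝ) (hfstar : fstar = f ustar)
    (Xstar : Set (EuclideanSpace ℝ (Fin p))) (hXstar : Xstar = {x ∈ Kstar | d x = fstar})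
    (Ld : ℝ) (hLd : Ld = ‖G‖ ^ 2 / σf)
    (projKs : EuclideanSpace ℝ (Fin p) → EuclideanSpace ℝ (Fin p))
    (hprojKs : ∀ z : EuclideanSpace ℝ (Fin p), projKs z ∈ Kstar ∧ ∀ w ∈ Kstar, ‖z - projKs z‖ ≤ ‖z - w‖)
    (LG : ℝ) (hLG : Ld ≤ LG) (α : ℕ → ℝ)
    (hα : ∀ k, 1 / LG ≤ α k ∧ α k ≤ 1 / Ld)
    (x : ℕ → EuclideanSpace ℝ (Fin p))
    (hxrec : ∀ k, x (k + 1) = projKs (x k + α k • (-(G (uu (x k))) - g)))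
    (xstar : EuclideanSpace ℝ (Fin p)) (hxstar : xstar ∈ Xstar)
    (Rd : ℝ) (hRd : Rd = ‖x 0 - xstar‖)
    (S : ℕ → ℝ) (hS : ∀ k, S k = ∑ j ∈ Finset.range (k + 1), α j)
    (uhat : ℕ → EuclideanSpace ℝ (Fin n))
    (huhat : ∀ k, uhat k = (S k)⁻¹ • ∑ j ∈ Finset.range (k + 1), α j • uu (x j))
 :
    ∀ k : ℕ,
      Metric.infDist (G (uhat k) + g) K ≤ 2 * LG * Rd / ((k : ℝ) + 1) ∧
      -(2 * LG * Rd / ((k : ℝ) + 1) * (Rd + ‖x 0‖)) ≤ f (uhat k) - fstar ∧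
      f (uhat k) - fstar ≤ LG * ‖x 0‖ ^ 2 / (2 * ((k : ℝ) + 1)) := by
  obtain rfl : Kstar = PointedCone.dual (innerₗ _) K :=
    hKstar.trans (by ext; simp [real_inner_comm])
  obtain rfl : Lag = lagrangian f G g := funext₂ hLag
  obtain rfl : d = fun y => lagrangian f G g (uu y) y := funext hd
  obtain rfl : uhat = fun k => (range (k + 1)).centerMass α fun j => uu (x j) :=
    funext fun k => (huhat k).trans (by rw [hS]; rfl)
  subst hXstar hfstar hLd hRd
  obtain ⟨hxstarK, hdual⟩ : _ ∧ lagrangian f G g (uu xstar) xstar = f ustar := hxstar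
  have hLd : 0 < ‖G‖ ^ 2 / σf := by have := norm_pos_iff.2 hG; positivity
  have hf : StrongConvexOn U σf f := strongConvexOn_iff_convex.2 <|
    (strongConvexOn_iff_convex.1 hfsc).subset (Set.subset_univ U) hUcv
  have hx : ∀ j, x (j + 1) ∈ PointedCone.dual (innerₗ _) K := fun j => by
    rw [hxrec j]; exact (hprojKs _).1
  have hxmin : ∀ j, IsMinOn (‖x j + α j • (-(G (uu (x j))) - g) - ·‖)
      (PointedCone.dual (innerₗ _) K) (x (j + 1)) := fun j => by
    rw [hxrec j]; exact isMinOn_iff.2 (hprojKs _).2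
  exact dualGradient_centerMass_bounds hσf hf (fun y => (huu y).1)
    (fun y => isMinOn_iff.2 (huu y).2) (fun j => (le_div_iff₀ hLd).1 (hα j).2) hx hxmin
    hustar.1 hustar.2.1 hKne hKcl hKcv hKcone hxstarK hdual (hLd.trans_le hLG)
    (fun j => (hα j).1)

theorem stmt_6 {n p : ℕ}
    (f : EuclideanSpace ℝ (Fin n) → ℝ) (σf : ℝ) (hσf : 0 < σf)
    (hfc : Continuous f) (hfsc : StrongConvexOn Set.univ σf f)
    (U : Set (EuclideanSpace ℝ (Fin n))) (hUne : U.Nonempty) (hUcl : IsClosed U) (hUcv : Convex ℝ U)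
    (G : EuclideanSpace ℝ (Fin n) →L[ℝ] EuclideanSpace ℝ (Fin p)) (hG : G ≠ 0) (g : EuclideanSpace ℝ (Fin p))
    (K : Set (EuclideanSpace ℝ (Fin p))) (hKne : K.Nonempty) (hKcl : IsClosed K) (hKcv : Convex ℝ K)
    (hKcone : ∀ c : ℝ, 0 ≤ c → ∀ v ∈ K, c • v ∈ K)
    (Kstar : Set (EuclideanSpace ℝ (Fin p)))
    (hKstar : Kstar = {x : EuclideanSpace ℝ (Fin p) | ∀ v ∈ K, 0 ≤ ⟪x, v⟫})
    (Lag : EuclideanSpace ℝ (Fin n) → EuclideanSpace ℝ (Fin p) → ℝ)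
    (hLag : ∀ u x, Lag u x = f u + ⟪x, -(G u) - g⟫)
    (uu : EuclideanSpace ℝ (Fin p) → EuclideanSpace ℝ (Fin n))
    (huu : ∀ x : EuclideanSpace ℝ (Fin p), uu x ∈ U ∧ ∀ u ∈ U, Lag (uu x) x ≤ Lag u x)
    (d : EuclideanSpace ℝ (Fin p) → ℝ) (hd : ∀ x, d x = Lag (uu x) x)
    (ustar : EuclideanSpace ℝ (Fin n))
    (hustar : ustar ∈ U ∧ G ustar + g ∈ K ∧ ∀ u ∈ U, G u + g ∈ K → f ustar ≤ f u)
    (fstar : ℝ) (hfstar : fstar = f ustar)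
    (Xstar : Set (EuclideanSpace ℝ (Fin p))) (hXstar : Xstar = {x ∈ Kstar | d x = fstar})
    (hXne : Xstar.Nonempty)
    (Ld : ℝ) (hLd : Ld = ‖G‖ ^ 2 / σf)
    (projKs : EuclideanSpace ℝ (Fin p) → EuclideanSpace ℝ (Fin p))
    (hprojKs : ∀ z : EuclideanSpace ℝ (Fin p), projKs z ∈ Kstar ∧ ∀ w ∈ Kstar, ‖z - projKs z‖ ≤ ‖z - w‖)
    (LG : ℝ) (hLG : Ld ≤ LG) (α : ℕ → ℝ)
    (hα : ∀ k, 1 / LG ≤ α k ∧ α k ≤ 1 / Ld)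
    (x : ℕ → EuclideanSpace ℝ (Fin p)) (hx0K : x 0 ∈ Kstar)
    (hxrec : ∀ k, x (k + 1) = projKs (x k + α k • (-(G (uu (x k))) - g)))
    (xstar : EuclideanSpace ℝ (Fin p)) (hxstar : xstar ∈ Xstar)
    (hxstarmin : ∀ z ∈ Xstar, ‖x 0 - xstar‖ ≤ ‖x 0 - z‖)
    (Rd : ℝ) (hRd : Rd = ‖x 0 - xstar‖)
    (S : ℕ → ℝ) (hS : ∀ k, S k = ∑ j ∈ Finset.range (k + 1), α j)
    (uhat : ℕ → EuclideanSpace ℝ (Fin n))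
    (huhat : ∀ k, uhat k = (S k)⁻¹ • ∑ j ∈ Finset.range (k + 1), α j • uu (x j))
 :
    ∀ k : ℕ,
      Metric.infDist (G (uhat k) + g) K ≤ 2 * LG * Rd / ((k : ℝ) + 1) ∧
      -(2 * LG * Rd / ((k : ℝ) + 1) * (Rd + ‖x 0‖)) ≤ f (uhat k) - fstar ∧
      f (uhat k) - fstar ≤ LG * ‖x 0‖ ^ 2 / (2 * ((k : ℝ) + 1)) :=
  stmt_6_general f σf hσf hfsc U hUcv G hG g K hKne hKcl hKcv hKcone Kstar hKstar Lag hLag uu huu d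
    hd ustar hustar fstar hfstar Xstar hXstar Ld hLd projKs hprojKs LG hLG α hα x hxrec xstar hxstar
    Rd hRd S hS uhat huhat
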